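/- arXiv:2210.04821 — 3 statements merged into one kernel-verified Lean document; each statement's English description precedes it below -/
import Mathlib

section
/- The sum of Euler's totient function satisfies \(\sum_{j=1}^n \phi(j) = \frac{3n^2}{\pi^2} + O(n \log n)\). -/
/-!
Möbius inversion of `∑_{d ∣ j} φ(d) = j` gives `φ = μ * id`, so
`∑_{j ≤ n} φ(j) = ∑_{d ≤ n} μ(d) T(⌊n/d⌋)` with
`T(q) = q(q+1)/2 = (n/d)²/2 + O(n/d)`.
The main term is `n²/2 · ∑_{d ≤ n} μ(d)/d²`, whose partial sum is within `1/n` of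
`1/ζ(2) = 6/π²`; the error terms add up to `n/2 · H_n = O(n log n)`.
-/

open Finset Real
open scoped ArithmeticFunction.Moebius

theorem ArithmeticFunction.coe_moebius_mul_coe_id_apply {R : Type*} [Ring R] (n : ℕ) :
    ((μ : ArithmeticFunction R) * (ArithmeticFunction.id : ArithmeticFunction R)) n =
      n.totient := by
  rcases n.eq_zero_or_pos with rfl | hn
  · simp
  rw [ArithmeticFunction.mul_apply]
  refine (ArithmeticFunction.sum_eq_iff_sum_mul_moebius_eq
    (f := fun n => (n.totient : R)) (g := fun n => (n : R))).1 (fun n _ => ?_) n hn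
  rw [← Nat.cast_sum, Nat.sum_totient]

theorem sum_Ioc_totient_eq_sum_moebius_mul {R : Type*} [Ring R] (n : ℕ) :
    ∑ j ∈ Ioc 0 n, (j.totient : R) =
      ∑ d ∈ Ioc 0 n, (μ d : R) * ∑ m ∈ Ioc 0 (n / d), (m : R) := by
  simp_rw [← ArithmeticFunction.coe_moebius_mul_coe_id_apply,
    ArithmeticFunction.sum_Ioc_mul_eq_sum_sum]
  simp

theorem sum_Ioc_natCast (q : ℕ) : ∑ m ∈ Ioc 0 q, (m : ℝ) = q * (q + 1) / 2 := by
  induction q with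
  | zero => simp
  | succ q ih =>
    rw [sum_Ioc_succ_top (Nat.zero_le q), ih]
    push_cast
    ring

theorem abs_sum_Ioc_floor_sub_sq_div_two_le {x : ℝ} (hx : 0 ≤ x) :
    |∑ m ∈ Ioc 0 ⌊x⌋₊, (m : ℝ) - x ^ 2 / 2| ≤ x / 2 := by
  have hle := Nat.floor_le hx
  have hlt := Nat.lt_floor_add_one x
  rw [sum_Ioc_natCast, abs_le]
  constructor <;> nlinarith

theorem abs_sub_sum_range_le_of_abs_le_inv_sq {f : ℕ → ℝ} {a : ℝ} (hf : HasSum f a)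
    {n : ℕ} (hn : n ≠ 0) (hf_le : ∀ d, n < d → |f d| ≤ ((d : ℝ) ^ 2)⁻¹) :
    |a - ∑ d ∈ range (n + 1), f d| ≤ (n : ℝ)⁻¹ := by
  have htail : ∀ N, n ≤ N →
      |∑ d ∈ range (N + 1), f d - ∑ d ∈ range (n + 1), f d| ≤ (n : ℝ)⁻¹ := by
    intro N hN
    rw [← sum_Ico_eq_sub _ (by omega), Ico_add_one_add_one_eq_Ioc]
    calc _ ≤ ∑ d ∈ Ioc n N, |f d| := abs_sum_le_sum_abs _ _
      _ ≤ ∑ d ∈ Ioc n N, ((d : ℝ) ^ 2)⁻¹ :=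
          sum_le_sum fun d hd => hf_le d (mem_Ioc.1 hd).1
      _ ≤ (n : ℝ)⁻¹ - (N : ℝ)⁻¹ := sum_Ioc_inv_sq_le_sub hn hN
      _ ≤ (n : ℝ)⁻¹ := sub_le_self _ (by positivity)
  have hlim := ((hf.tendsto_sum_nat.comp (Filter.tendsto_add_atTop_nat 1)).sub_const
    (∑ d ∈ range (n + 1), f d)).abs
  exact le_of_tendsto hlim (Filter.eventually_atTop.2 ⟨n, htail⟩)

theorem hasSum_moebius_div_sq : HasSum (fun d : ℕ => (μ d : ℝ) / d ^ 2) (6 / π ^ 2) := by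
  have h2 : (1 : ℝ) < (2 : ℂ).re := by norm_num
  have hL : LSeries (fun n => (μ n : ℂ)) 2 = ((6 / π ^ 2 : ℝ) : ℂ) := by
    have h := ArithmeticFunction.LSeries_zeta_mul_Lseries_moebius h2
    rw [ArithmeticFunction.LSeries_zeta_eq_riemannZeta h2, riemannZeta_two] at h
    have hpi : (π : ℂ) ≠ 0 := Complex.ofReal_ne_zero.2 pi_ne_zero
    push_cast
    field_simp at h ⊢
    linear_combination h
  have h := (ArithmeticFunction.LSeriesSummable_moebius_iff.2 h2).LSeriesHasSum
  rw [hL] at h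
  refine Complex.hasSum_ofReal.1 (h.congr_fun fun d => ?_)
  rcases eq_or_ne d 0 with rfl | hd
  · simp
  · rw [LSeries.term_of_ne_zero hd, show (2 : ℂ) = ((2 : ℕ) : ℂ) by norm_num,
      Complex.cpow_natCast]
    push_cast
    rfl

theorem abs_moebius_cast_le_one (n : ℕ) : |(μ n : ℝ)| ≤ 1 := by
  exact_mod_cast ArithmeticFunction.abs_moebius_le_one

theorem abs_sub_sum_Ioc_moebius_div_sq_le {n : ℕ} (hn : n ≠ 0) :
    |6 / π ^ 2 - ∑ d ∈ Ioc 0 n, (μ d : ℝ) / d ^ 2| ≤ (n : ℝ)⁻¹ := by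
  have h := abs_sub_sum_range_le_of_abs_le_inv_sq hasSum_moebius_div_sq hn fun (d : ℕ) _ => by
    rw [abs_div, abs_of_nonneg (sq_nonneg (d : ℝ)), div_eq_mul_inv]
    exact mul_le_of_le_one_left (by positivity) (abs_moebius_cast_le_one d)
  rwa [range_eq_Ico, sum_eq_sum_Ico_succ_bot (by omega : 0 < n + 1), Ico_add_one_add_one_eq_Ioc,
    Nat.cast_zero, zero_pow two_ne_zero, div_zero, zero_add] at h

theorem abs_sum_Ioc_totient_sub_sum_moebius_div_sq_le (n : ℕ) :
    |∑ j ∈ Ioc 0 n, (j.totient : ℝ) - n ^ 2 / 2 * ∑ d ∈ Ioc 0 n, (μ d : ℝ) / d ^ 2|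
      ≤ n / 2 * (harmonic n : ℝ) := by
  have hharmonic : (harmonic n : ℝ) = ∑ d ∈ Ioc 0 n, (d : ℝ)⁻¹ := by
    rw [harmonic_eq_sum_Icc, ← Icc_add_one_left_eq_Ioc]
    push_cast
    rfl
  rw [sum_Ioc_totient_eq_sum_moebius_mul, mul_sum, ← sum_sub_distrib, hharmonic, mul_sum]
  refine (abs_sum_le_sum_abs _ _).trans (sum_le_sum fun d hd => ?_)
  have hd : (d : ℝ) ≠ 0 := by simp [(mem_Ioc.1 hd).1.ne']
  have hterm := abs_sum_Ioc_floor_sub_sq_div_two_le (by positivity : (0 : ℝ) ≤ n / d)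
  rw [Nat.floor_div_eq_div] at hterm
  calc _ = |(μ d : ℝ)| * |∑ m ∈ Ioc 0 (n / d), (m : ℝ) - ((n : ℝ) / d) ^ 2 / 2| := by
        rw [← abs_mul]; congr 1; field_simp
    _ ≤ 1 * ((n : ℝ) / d / 2) :=
        mul_le_mul (abs_moebius_cast_le_one d) hterm (abs_nonneg _) zero_le_one
    _ = n / 2 * (d : ℝ)⁻¹ := by ring

theorem totient_sum_asymptotic :
    ∃ C : ℝ, 0 < C ∧ ∀ n : ℕ, 2 ≤ n →
      |(∑ j ∈ Finset.Icc 1 n, (Nat.totient j : ℝ)) - 3 * (n : ℝ) ^ 2 / Real.pi ^ 2|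
        ≤ C * (n : ℝ) * Real.log n := by
  refine ⟨2, two_pos, fun n hn => ?_⟩
  have hlog : 2 / 3 < log n := calc
    (2 : ℝ) / 3 < log 2 := by linarith [log_two_gt_d9]
    _ ≤ log n := log_le_log two_pos (by exact_mod_cast hn)
  have hharmonic := harmonic_le_one_add_log n
  have hmain := abs_sum_Ioc_totient_sub_sum_moebius_div_sq_le n
  have hconst := abs_sub_sum_Ioc_moebius_div_sq_le (n := n) (by omega)
  set A := ∑ d ∈ Ioc 0 n, (μ d : ℝ) / d ^ 2
  rw [← Icc_add_one_left_eq_Ioc, zero_add] at hmain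
  calc _ = |(∑ j ∈ Icc 1 n, (j.totient : ℝ) - n ^ 2 / 2 * A)
          - n ^ 2 / 2 * (6 / π ^ 2 - A)| := by
        ring_nf
    _ ≤ n / 2 * (1 + log n) + n ^ 2 / 2 * (n : ℝ)⁻¹ := by
        refine (abs_sub _ _).trans (add_le_add (hmain.trans ?_) ?_)
        · gcongr
        · rw [abs_mul, abs_of_nonneg (by positivity)]
          gcongr
    _ ≤ 2 * n * log n := by
        have hn0 : (0 : ℝ) < n := by positivity
        field_simp
        nlinarith
end

section
/- The sum \(\sum_{j=1}^{n} \frac{\phi(j)}{j} = \frac{6n}{\pi^2} + O(\sqrt{n})\). -/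
/-!
Möbius inversion of `∑_{d ∣ j} φ d = j` gives `φ j / j = ∑_{d ∣ j} μ d / d`, so the sum equals
`∑_{d ≤ n} (μ d / d) ⌊n / d⌋`. Replacing `⌊n / d⌋` by `n / d` costs at most
`∑_{d ≤ n} 1 / d ≤ 2 √n`, and `n ∑_{d ≤ n} μ d / d²` differs from
`n ∑_d μ d / d² = n / ζ(2) = 6 n / π²` by at most `n ∑_{d > n} 1 / d² ≤ 2`.
-/

open ArithmeticFunction Finset Real
open scoped ArithmeticFunction.Moebius Nat

lemma tsum_moebius_div_sq : ∑' d : ℕ, (μ d : ℝ) / d ^ 2 = 6 / π ^ 2 := by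
  have hs : 1 < (2 : ℂ).re := by norm_num
  have hL : LSeries (fun d ↦ (μ d : ℂ)) 2 = ((6 / π ^ 2 : ℝ) : ℂ) := by
    have h := LSeries_zeta_mul_Lseries_moebius hs
    rw [LSeries_zeta_eq_riemannZeta hs, riemannZeta_two] at h
    rw [eq_inv_of_mul_eq_one_right h]
    push_cast
    ring
  apply Complex.ofReal_injective
  rw [← hL, LSeries, Complex.ofReal_tsum]
  refine tsum_congr fun d ↦ ?_
  rcases eq_or_ne d 0 with rfl | hd
  · simp
  · rw [LSeries.term_of_ne_zero hd, Complex.cpow_ofNat]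
    push_cast
    rfl

lemma totient_div_eq_sum_moebius_div (n : ℕ) :
    (φ n : ℝ) / n = ∑ d ∈ n.divisors, (μ d : ℝ) / d := by
  rcases n.eq_zero_or_pos with rfl | hn
  · simp
  have h := (sum_eq_iff_sum_smul_moebius_eq (f := fun m ↦ (φ m : ℝ))
    (g := fun m ↦ (m : ℝ))).mp (fun m _ ↦ by exact_mod_cast Nat.sum_totient m) n hn
  rw [← h, sum_div, ← Nat.sum_divisorsAntidiagonal fun d _ ↦ (μ d : ℝ) / d]
  refine sum_congr rfl fun x hx ↦ ?_
  obtain ⟨hmul, -⟩ := Nat.mem_divisorsAntidiagonal.mp hx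
  have : (x.2 : ℝ) ≠ 0 := by
    exact_mod_cast right_ne_zero_of_mul (hmul ▸ hn.ne')
  rw [zsmul_eq_mul, ← hmul, Nat.cast_mul]
  field_simp

lemma sum_Icc_totient_div_eq_sum_moebius_div_mul (n : ℕ) :
    ∑ j ∈ Icc 1 n, (φ j : ℝ) / j = ∑ d ∈ Icc 1 n, (μ d : ℝ) / d * (n / d : ℕ) := by
  have h := sum_Ioc_mul_zeta_eq_sum ((μ : ArithmeticFunction ℝ).pdiv ↑ArithmeticFunction.id) n
  simp only [coe_mul_zeta_apply, pdiv_apply, natCoe_apply, id_apply, intCoe_apply] at h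
  simp only [totient_div_eq_sum_moebius_div]
  exact h

lemma abs_nat_div_sub_div_le_one (n d : ℕ) : |((n / d : ℕ) : ℝ) - n / d| ≤ 1 := by
  rw [← Nat.floor_div_eq_div (K := ℝ), abs_sub_comm, abs_le]
  have := Nat.floor_le (a := (n : ℝ) / d) (by positivity)
  have := Nat.lt_floor_add_one ((n : ℝ) / d)
  constructor <;> linarith

lemma sum_Icc_inv_le_two_mul_sqrt (n : ℕ) : ∑ d ∈ Icc 1 n, (d : ℝ)⁻¹ ≤ 2 * √n := by
  rcases n.eq_zero_or_pos with rfl | hn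
  · simp
  have hlog : Real.log n ≤ 2 * (√n - 1) := by
    have := log_le_sub_one_of_pos (sqrt_pos.2 (by positivity : (0 : ℝ) < n))
    rw [log_sqrt (Nat.cast_nonneg n)] at this
    linarith
  have h := harmonic_le_one_add_log n
  simp only [harmonic_eq_sum_Icc, Rat.cast_sum, Rat.cast_inv, Rat.cast_natCast] at h
  linarith [one_le_sqrt.2 (by exact_mod_cast hn : (1 : ℝ) ≤ n)]

lemma tsum_inv_sq_nat_add_le (n : ℕ) :
    ∑' d : ℕ, (((d + (n + 1) : ℕ) : ℝ) ^ 2)⁻¹ ≤ 2 / (n + 1) := by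
  refine Real.tsum_le_of_sum_range_le (fun _ ↦ by positivity) fun m ↦ ?_
  have h := sum_Ioo_inv_sq_le (α := ℝ) n (n + 1 + m)
  rw [← Ico_add_one_left_eq_Ioo, sum_Ico_eq_sum_range, Nat.add_sub_cancel_left] at h
  simpa only [add_comm] using h

section BoundedWeights

variable {a : ℕ → ℝ} (ha : ∀ d, |a d| ≤ 1)
include ha

lemma abs_tsum_div_sq_sub_sum_Icc_le (n : ℕ) :
    |∑' d : ℕ, a d / d ^ 2 - ∑ d ∈ Icc 1 n, a d / d ^ 2| ≤ 2 / (n + 1) := by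
  have hbound : ∀ d : ℕ, ‖a d / d ^ 2‖ ≤ ((d : ℝ) ^ 2)⁻¹ := fun d ↦ by
    rw [norm_div, norm_pow, RCLike.norm_natCast, div_eq_mul_inv]
    exact mul_le_of_le_one_left (by positivity) (ha d)
  have hsum : Summable fun d : ℕ ↦ a d / d ^ 2 :=
    .of_norm_bounded (Real.summable_nat_pow_inv.2 one_lt_two) hbound
  have hhead : ∑ d ∈ range (n + 1), a d / d ^ 2 = ∑ d ∈ Icc 1 n, a d / d ^ 2 := by
    rw [range_eq_Ico, sum_eq_sum_Ico_succ_bot (by omega : 0 < n + 1), zero_add,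
      Ico_add_one_right_eq_Icc]
    simp -- the `d = 0` term is `a 0 / 0 = 0`
  rw [← hsum.sum_add_tsum_nat_add (n + 1), hhead, add_sub_cancel_left, ← Real.norm_eq_abs]
  have hsum' : Summable fun d : ℕ ↦ a (d + (n + 1)) / ((d + (n + 1) : ℕ) : ℝ) ^ 2 :=
    (summable_nat_add_iff (f := fun d : ℕ ↦ a d / d ^ 2) (n + 1)).2 hsum
  have htail : Summable fun d : ℕ ↦ (((d + (n + 1) : ℕ) : ℝ) ^ 2)⁻¹ :=
    (summable_nat_add_iff (f := fun d : ℕ ↦ ((d : ℝ) ^ 2)⁻¹) (n + 1)).2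
      (Real.summable_nat_pow_inv.2 one_lt_two)
  calc ‖∑' d : ℕ, a (d + (n + 1)) / ((d + (n + 1) : ℕ) : ℝ) ^ 2‖
      ≤ ∑' d : ℕ, ‖a (d + (n + 1)) / ((d + (n + 1) : ℕ) : ℝ) ^ 2‖ :=
        norm_tsum_le_tsum_norm hsum'.norm
    _ ≤ ∑' d : ℕ, (((d + (n + 1) : ℕ) : ℝ) ^ 2)⁻¹ :=
        hsum'.norm.tsum_le_tsum (fun d ↦ hbound _) htail
    _ ≤ 2 / (n + 1) := tsum_inv_sq_nat_add_le n

lemma abs_sum_div_mul_div_sub_le (n : ℕ) :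
    |∑ d ∈ Icc 1 n, a d / d * (n / d : ℕ) - n * ∑ d ∈ Icc 1 n, a d / d ^ 2| ≤ 2 * √n := by
  rw [mul_sum, ← sum_sub_distrib]
  refine (abs_sum_le_sum_abs _ _).trans <| le_trans (sum_le_sum fun d _ ↦ ?_)
    (sum_Icc_inv_le_two_mul_sqrt n)
  have : a d / d * (n / d : ℕ) - n * (a d / d ^ 2) = a d / d * (((n / d : ℕ) : ℝ) - n / d) := by
    ring
  rw [this, abs_mul, abs_div, Nat.abs_cast, ← one_div]
  exact mul_le_of_le_one_right (by positivity) (abs_nat_div_sub_div_le_one n d) |>.trans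
    (div_le_div_of_nonneg_right (ha d) d.cast_nonneg)

end BoundedWeights

theorem totient_over_j_sum_asymptotic :
    ∃ C : ℝ, 0 < C ∧ ∀ n : ℕ, 1 ≤ n →
      |(∑ j ∈ Finset.Icc 1 n, (Nat.totient j : ℝ) / (j : ℝ)) - 6 * (n : ℝ) / Real.pi ^ 2|
        ≤ C * Real.sqrt n := by
  refine ⟨4, by norm_num, fun n hn ↦ ?_⟩
  have hμ : ∀ d, |(μ d : ℝ)| ≤ 1 := fun d ↦ by exact_mod_cast abs_moebius_le_one
  have hmain := abs_sum_div_mul_div_sub_le hμ n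
  have htail := abs_tsum_div_sq_sub_sum_Icc_le hμ n
  rw [tsum_moebius_div_sq] at htail
  have hscaled : n * (2 / (n + 1) : ℝ) ≤ 2 * √n := by
    have : (1 : ℝ) ≤ √n := one_le_sqrt.2 (by exact_mod_cast hn)
    rw [mul_div_assoc', div_le_iff₀ (by positivity)]
    nlinarith
  set S := ∑ d ∈ Icc 1 n, (μ d : ℝ) / d ^ 2
  rw [sum_Icc_totient_div_eq_sum_moebius_div_mul]
  calc _ = |(∑ d ∈ Icc 1 n, (μ d : ℝ) / d * (n / d : ℕ) - n * S) - n * (6 / π ^ 2 - S)| := by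
        ring_nf
    _ ≤ 2 * √n + n * (2 / (n + 1)) := by
        grw [abs_sub, abs_mul, Nat.abs_cast, hmain, htail]
    _ ≤ 4 * √n := by linarith
end

section
/- For integers \(1 < m \le n\), the count \(\phi_m(n)\) of integers in \(\{1,\ldots,m\}\) coprime to \(n\) satisfies \(\left|\phi_m(n) - \frac{m}{n}\phi(n)\right| \le 2^{w(n)-1}\), where \(w(n)\) is the number of distinct prime divisors of \(n\). -/
/-!
Möbius inversion turns the count into `φ_m(n) = ∑_{d ∣ n} μ(d) ⌊m/d⌋` and `φ(n)` into
`∑_{d ∣ n} μ(d) n/d`, so `φ_m(n) - (m/n) φ(n) = -∑_{d ∣ n} μ(d) {m/d}` with fractional parts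
`{m/d} ∈ [0, 1)`. Since `∑_{d ∣ n} μ(d) = 0` for `n > 1`, the fractional parts may be recentred
at `1/2`, and the sum is then at most half the number `2^{w(n)}` of squarefree divisors of `n`.
-/

open Finset ArithmeticFunction
open scoped ArithmeticFunction.Moebius ArithmeticFunction.zeta Nat

section Ring

variable {R : Type*} [Ring R]

theorem sum_divisors_moebius (n : ℕ) :
    ∑ d ∈ n.divisors, (μ d : R) = if n = 1 then 1 else 0 := by
  have h := congrArg (· n) (coe_moebius_mul_coe_zeta : (μ * ζ : ArithmeticFunction R) = 1)
  rwa [coe_mul_zeta_apply, one_apply] at h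

theorem ite_coprime_eq_sum_divisors_moebius {n : ℕ} (hn : n ≠ 0) (a : ℕ) :
    (if a.Coprime n then 1 else 0 : R) = ∑ d ∈ n.divisors, if d ∣ a then (μ d : R) else 0 := by
  have hdiv : {d ∈ n.divisors | d ∣ a} = (a.gcd n).divisors := by
    rw [← Nat.divisors_filter_dvd_of_dvd hn (Nat.gcd_dvd_right a n)]
    refine filter_congr fun d hd => ?_
    rw [Nat.dvd_gcd_iff, and_iff_left (Nat.dvd_of_mem_divisors hd)]
  rw [← sum_filter, hdiv, sum_divisors_moebius]

theorem card_filter_coprime_Icc_eq_sum_moebius (m : ℕ) {n : ℕ} (hn : n ≠ 0) :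
    (#{a ∈ Icc 1 m | a.Coprime n} : R) = ∑ d ∈ n.divisors, (μ d : R) * (m / d : ℕ) := by
  rw [natCast_card_filter, sum_congr rfl fun a _ => ite_coprime_eq_sum_divisors_moebius hn a,
    sum_comm]
  refine sum_congr rfl fun d _ => ?_
  rw [← sum_filter, sum_const, show Icc 1 m = Ioc 0 m from Icc_succ_left_eq_Ioc 0 m,
    Nat.Ioc_filter_dvd_card_eq_div, nsmul_eq_mul, Nat.cast_comm]

end Ring

theorem totient_eq_card_filter_coprime_Icc (n : ℕ) : φ n = #{a ∈ Icc 1 n | a.Coprime n} := by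
  rw [← Nat.filter_coprime_Ico_eq_totient n 1, add_comm, Ico_add_one_right_eq_Icc]
  simp_rw [Nat.coprime_comm]

theorem card_divisors_filter_squarefree {n : ℕ} (hn : n ≠ 0) :
    #{d ∈ n.divisors | Squarefree d} = 2 ^ #n.primeFactors := by
  rw [card_eq_sum_ones, Nat.sum_divisors_filter_squarefree hn, ← card_eq_sum_ones, card_powerset,
    Nat.factors_eq]
  simp

section LinearOrderedField

variable {K : Type*} [Field K] [LinearOrder K] [IsStrictOrderedRing K]

theorem sum_divisors_abs_moebius {n : ℕ} (hn : n ≠ 0) :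
    ∑ d ∈ n.divisors, |(μ d : K)| = 2 ^ #n.primeFactors := by
  simp_rw [← Int.cast_abs, abs_moebius, Int.cast_ite, Int.cast_one, Int.cast_zero]
  rw [sum_boole, card_divisors_filter_squarefree hn, Nat.cast_pow, Nat.cast_ofNat]

theorem abs_sum_divisors_moebius_mul_le {n : ℕ} (hn : n ≠ 1) {x : ℕ → K}
    (hx : ∀ d ∈ n.divisors, x d ∈ Set.Icc 0 1) :
    |∑ d ∈ n.divisors, μ d * x d| ≤ 2 ^ (#n.primeFactors - 1) := by
  rcases eq_or_ne n 0 with rfl | hn0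
  · simp
  have hω : #n.primeFactors ≠ 0 :=
    (card_pos.mpr (Nat.nonempty_primeFactors.mpr (by omega))).ne'
  calc |∑ d ∈ n.divisors, μ d * x d|
      = |∑ d ∈ n.divisors, μ d * (x d - 1 / 2)| := by
        simp_rw [mul_sub, sum_sub_distrib, ← sum_mul, sum_divisors_moebius, if_neg hn, zero_mul,
          sub_zero]
    _ ≤ ∑ d ∈ n.divisors, |(μ d : K)| * (1 / 2) := by
        refine (abs_sum_le_sum_abs _ _).trans (sum_le_sum fun d hd => ?_)
        obtain ⟨hx0, hx1⟩ := hx d hd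
        rw [abs_mul]
        exact mul_le_mul_of_nonneg_left (abs_sub_le_iff.mpr ⟨by linarith, by linarith⟩)
          (abs_nonneg _)
    _ = 2 ^ (#n.primeFactors - 1) := by
        rw [← sum_mul, sum_divisors_abs_moebius hn0, ← Nat.succ_pred_eq_of_ne_zero hω, pow_succ]
        simp

variable [FloorRing K]

theorem natCast_div_eq_sub_fract (m d : ℕ) :
    ((m / d : ℕ) : K) = m / d - Int.fract ((m : K) / d) := by
  rw [Int.fract_div_natCast_eq_div_natCast_mod]
  rcases eq_or_ne d 0 with rfl | hd
  · simp
  · rw [eq_sub_iff_add_eq, eq_div_iff (Nat.cast_ne_zero.mpr hd), add_mul,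
      div_mul_cancel₀ _ (Nat.cast_ne_zero.mpr hd)]
    exact_mod_cast Nat.div_add_mod' m d

theorem card_filter_coprime_Icc_sub_div_mul_totient (m : ℕ) {n : ℕ} (hn : n ≠ 0) :
    (#{a ∈ Icc 1 m | a.Coprime n} : K) - m / n * φ n =
      -∑ d ∈ n.divisors, μ d * Int.fract ((m : K) / d) := by
  have htotient := card_filter_coprime_Icc_eq_sum_moebius (R := K) n hn
  rw [← totient_eq_card_filter_coprime_Icc] at htotient
  rw [card_filter_coprime_Icc_eq_sum_moebius m hn, htotient, mul_sum, ← sum_sub_distrib,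
    ← sum_neg_distrib]
  refine sum_congr rfl fun d hd => ?_
  have hd0 : (d : K) ≠ 0 := Nat.cast_ne_zero.mpr (Nat.ne_of_gt (Nat.pos_of_mem_divisors hd))
  rw [natCast_div_eq_sub_fract m d, Nat.cast_div (Nat.dvd_of_mem_divisors hd) hd0]
  field_simp
  ring

end LinearOrderedField

theorem phi_m_n_estimate :
    ∀ m n : ℕ, 1 < m → m ≤ n →
      |(((Finset.Icc 1 m).filter (fun a => Nat.Coprime a n)).card : ℝ)
        - (m : ℝ) / (n : ℝ) * (Nat.totient n : ℝ)|
        ≤ 2 ^ (n.primeFactors.card - 1) := by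
  intro m n _ hmn
  rw [card_filter_coprime_Icc_sub_div_mul_totient m (by omega), abs_neg]
  exact abs_sum_divisors_moebius_mul_le (by omega) fun d _ =>
    ⟨Int.fract_nonneg _, (Int.fract_lt_one _).le⟩
end
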